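/- For all complex numbers x, y with |x| < 1 and |y| < 1, one has ((Σ_{j∈ℤ} (−1)ʲ x^{j²}) + (Σ_{k∈ℤ} (−1)ᵏ y^{k²}))/2 = Σ_{(j,k)} (−1)ʲ (x^{j²} − x^{(j+1)²})·(y^{k²} − y^{(k+1)²}), where the right-hand sum runs over all pairs of nonnegative integers (j,k) with j ≡ k (mod 2), and all series converge absolutely. -/

import Mathlib

/-!
Write `a n = x ^ (n ^ 2) - x ^ ((n + 1) ^ 2)` and `b n` likewise for `y`. The sequence `a`
telescopes to `∑ a n = 1`, while folding the even sum over `ℤ` onto `ℕ` pairs the terms of index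
`n` and `n + 1`, giving `∑ⱼ (-1) ^ j x ^ (j ^ 2) = ∑ (-1) ^ n a n`. On the other side, the parity
constraint is absorbed by `[j ≡ k mod 2] (-1) ^ j = ((-1) ^ j + (-1) ^ k) / 2`, so the double
series splits into `((∑ (-1) ^ j a j) (∑ b k) + (∑ a j) (∑ (-1) ^ k b k)) / 2`.
-/

section Shift

variable {G : Type*} [AddCommGroup G] [TopologicalSpace G] [IsTopologicalAddGroup G]
  {g : ℕ → G} {a : G}

theorem HasSum.nat_succ (hg : HasSum g a) : HasSum (fun n => g (n + 1)) (a - g 0) := by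
  simpa using (hasSum_nat_add_iff' 1).mpr hg

theorem HasSum.sub_nat_succ (hg : HasSum g a) : HasSum (fun n => g n - g (n + 1)) (g 0) := by
  simpa using hg.sub hg.nat_succ

theorem HasSum.add_nat_succ (hg : HasSum g a) :
    HasSum (fun n => g n + g (n + 1)) (a + (a - g 0)) :=
  hg.add hg.nat_succ

theorem HasSum.int_natAbs (hg : HasSum g a) :
    HasSum (fun j : ℤ => g j.natAbs) (a + (a - g 0)) :=
  HasSum.of_nat_of_neg_add_one (by simpa only [Int.natAbs_natCast] using hg)
    (by simpa only [Int.natAbs_neg, ← Nat.cast_succ, Int.natAbs_natCast] using hg.nat_succ)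

end Shift

theorem neg_one_zpow_eq_pow_natAbs {K : Type*} [DivisionRing K] (j : ℤ) :
    (-1 : K) ^ j = (-1) ^ j.natAbs := by
  obtain ⟨n, rfl | rfl⟩ := Int.eq_nat_or_neg j <;> simp [← inv_pow]

theorem zpow_sq_eq_pow_natAbs_sq {K : Type*} [DivisionRing K] (x : K) (j : ℤ) :
    x ^ (j ^ 2) = x ^ (j.natAbs ^ 2) := by
  rw [← Int.natAbs_sq, ← zpow_natCast]
  push_cast
  rfl

theorem ite_mod_two_eq_neg_one_pow {K : Type*} [DivisionRing K] [CharZero K] (j k : ℕ) :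
    (if j % 2 = k % 2 then (-1 : K) ^ j else 0) = ((-1) ^ j + (-1) ^ k) / 2 := by
  rw [neg_one_pow_eq_pow_mod_two (n := j), neg_one_pow_eq_pow_mod_two (n := k)]
  rcases Nat.mod_two_eq_zero_or_one j with hj | hj <;>
    rcases Nat.mod_two_eq_zero_or_one k with hk | hk <;>
      norm_num [hj, hk]

theorem summable_pow_sq_of_lt_one {r : ℝ} (h₀ : 0 ≤ r) (h₁ : r < 1) :
    Summable fun n : ℕ => r ^ (n ^ 2) :=
  (summable_geometric_of_lt_one h₀ h₁).of_nonneg_of_le (fun n => by positivity)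
    fun n => pow_le_pow_of_le_one h₀ h₁.le (Nat.le_self_pow two_ne_zero n)

section Theta

variable {𝕜 : Type*} [NormedField 𝕜] {x : 𝕜}

theorem summable_norm_pow_sq (hx : ‖x‖ < 1) : Summable fun n : ℕ => ‖x ^ (n ^ 2)‖ := by
  simpa only [norm_pow] using summable_pow_sq_of_lt_one (norm_nonneg x) hx

theorem summable_norm_pow_sq_sub_pow_succ_sq (hx : ‖x‖ < 1) :
    Summable fun n : ℕ => ‖x ^ (n ^ 2) - x ^ ((n + 1) ^ 2)‖ := by
  have h := summable_norm_pow_sq hx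
  refine (h.add ((summable_nat_add_iff 1).mpr h)).of_nonneg_of_le (fun n => norm_nonneg _)
    fun n => norm_sub_le _ _

variable [CompleteSpace 𝕜]

theorem hasSum_pow_sq_sub_pow_succ_sq (hx : ‖x‖ < 1) :
    HasSum (fun n : ℕ => x ^ (n ^ 2) - x ^ ((n + 1) ^ 2)) 1 := by
  simpa using (summable_norm_pow_sq hx).of_norm.hasSum.sub_nat_succ

theorem hasSum_int_neg_one_zpow_mul_zpow_sq (hx : ‖x‖ < 1) :
    HasSum (fun j : ℤ => (-1 : 𝕜) ^ j * x ^ (j ^ 2))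
      (∑' n : ℕ, (-1) ^ n * (x ^ (n ^ 2) - x ^ ((n + 1) ^ 2))) := by
  have hg : Summable fun n : ℕ => (-1 : 𝕜) ^ n * x ^ (n ^ 2) :=
    Summable.of_norm <| by
      simpa only [norm_mul, norm_pow, norm_neg, norm_one, one_pow, one_mul] using
        summable_norm_pow_sq hx
  have hpair : ∀ n : ℕ, (-1 : 𝕜) ^ n * x ^ (n ^ 2) + (-1) ^ (n + 1) * x ^ ((n + 1) ^ 2)
      = (-1) ^ n * (x ^ (n ^ 2) - x ^ ((n + 1) ^ 2)) := fun n => by ring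
  rw [← funext hpair, hg.hasSum.add_nat_succ.tsum_eq]
  simpa only [neg_one_zpow_eq_pow_natAbs, zpow_sq_eq_pow_natAbs_sq] using hg.hasSum.int_natAbs

theorem hasSum_ite_mod_two_neg_one_pow_mul [CharZero 𝕜] {a b : ℕ → 𝕜}
    (ha : Summable fun n => ‖a n‖) (hb : Summable fun n => ‖b n‖) :
    HasSum (fun p : ℕ × ℕ => if p.1 % 2 = p.2 % 2 then (-1) ^ p.1 * (a p.1 * b p.2) else 0)
      (((∑' n, (-1) ^ n * a n) * ∑' n, b n + (∑' n, a n) * ∑' n, (-1) ^ n * b n) / 2) := by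
  have ha' : Summable fun n => ‖(-1 : 𝕜) ^ n * a n‖ := by
    simpa only [norm_mul, norm_pow, norm_neg, norm_one, one_pow, one_mul] using ha
  have hb' : Summable fun n => ‖(-1 : 𝕜) ^ n * b n‖ := by
    simpa only [norm_mul, norm_pow, norm_neg, norm_one, one_pow, one_mul] using hb
  have hab := summable_mul_of_summable_norm ha' hb
  have hab' := summable_mul_of_summable_norm ha hb'
  refine (((ha'.of_norm.hasSum.mul hb.of_norm.hasSum hab).add
    (ha.of_norm.hasSum.mul hb'.of_norm.hasSum hab')).div_const 2).congr_fun fun p => ?_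
  rw [← zero_mul (a p.1 * b p.2), ← ite_mul, ite_mod_two_eq_neg_one_pow]
  ring

end Theta

/-- Decomposition of the twisted torus partition function of the loop-normalized
factorizing defect line at irrational points of the free boson orbifold branch. -/
theorem stmt_9 (x y : ℂ) (hx : ‖x‖ < 1) (hy : ‖y‖ < 1) :
    (Summable fun j : ℤ => (-1 : ℂ) ^ j * x ^ (j ^ 2)) ∧
    (Summable fun k : ℤ => (-1 : ℂ) ^ k * y ^ (k ^ 2)) ∧
    (Summable fun p : ℕ × ℕ =>
      if p.1 % 2 = p.2 % 2 then
        (-1 : ℂ) ^ p.1 *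
          ((x ^ (p.1 ^ 2) - x ^ ((p.1 + 1) ^ 2)) * (y ^ (p.2 ^ 2) - y ^ ((p.2 + 1) ^ 2)))
      else 0) ∧
    ((∑' j : ℤ, (-1 : ℂ) ^ j * x ^ (j ^ 2)) + (∑' k : ℤ, (-1 : ℂ) ^ k * y ^ (k ^ 2))) / 2
      = ∑' p : ℕ × ℕ,
          if p.1 % 2 = p.2 % 2 then
            (-1 : ℂ) ^ p.1 *
              ((x ^ (p.1 ^ 2) - x ^ ((p.1 + 1) ^ 2)) * (y ^ (p.2 ^ 2) - y ^ ((p.2 + 1) ^ 2)))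
          else 0 := by
  have hθx := hasSum_int_neg_one_zpow_mul_zpow_sq hx
  have hθy := hasSum_int_neg_one_zpow_mul_zpow_sq hy
  have hF := hasSum_ite_mod_two_neg_one_pow_mul
    (summable_norm_pow_sq_sub_pow_succ_sq hx) (summable_norm_pow_sq_sub_pow_succ_sq hy)
  refine ⟨hθx.summable, hθy.summable, hF.summable, ?_⟩
  rw [hθx.tsum_eq, hθy.tsum_eq, hF.tsum_eq, (hasSum_pow_sq_sub_pow_succ_sq hx).tsum_eq,
    (hasSum_pow_sq_sub_pow_succ_sq hy).tsum_eq]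
  ring
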